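/- Let E be a 3-dimensional real inner product space and R an algebraic curvature tensor on E. If for every unit vector v ∈ E there exists a nonzero vector w orthogonal to v with R(w,v)v = 0, then R has signed sectional curvatures: either R(x,y,y,x) ≥ 0 for all orthonormal x, y ∈ E, or R(x,y,y,x) ≤ 0 for all orthonormal x, y ∈ E. (This is the pointwise content of the statement that a 3-manifold with higher rank has pointwise signed sectional curvatures.) -/

import Mathlib

open scoped RealInnerProductSpace

/-- An algebraic curvature tensor on a real inner product space `E`: a multilinear map
`R : E × E × E × E → ℝ` with the symmetries of the Riemann curvature tensor.
For vectors `x y z`, the value `R x y z ·` represents the linear functional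
`w ↦ ⟨R(x,y)z, w⟩` determined by the curvature operator `R(x,y)z`. -/
structure AlgCurvTensor (E : Type*) [NormedAddCommGroup E] [InnerProductSpace ℝ E] where
  R : E →ₗ[ℝ] E →ₗ[ℝ] E →ₗ[ℝ] E →ₗ[ℝ] ℝ
  antisym_fst : ∀ x y z w : E, R x y z w = - R y x z w
  antisym_snd : ∀ x y z w : E, R x y z w = - R x y w z
  pair_symm : ∀ x y z w : E, R x y z w = R z w x y
  bianchi : ∀ x y z w : E, R x y z w + R y z x w + R z x y w = 0

/-!
For `v ≠ 0` the Jacobi form `(a, b) ↦ R(a,v,v,b)` is symmetric and kills `v`; by hypothesis it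
also kills some `w ⟂ v`. In dimension 3 a symmetric form with a two-dimensional kernel is
semidefinite: if it took both signs on `a` and `b` it would be nondegenerate on `span {a, b}`,
which must meet `span {v, w}` nontrivially. Any two planes of a 3-space share a nonzero vector
`v`, and the sectional curvature of a plane through `v` is a positive multiple of the Jacobi form
of `v` evaluated on a suitable vector of that plane, so no two planes have sectional curvatures
of opposite signs.
-/

open Module

section LinearAlgebra

variable {𝕜 E : Type*} [Field 𝕜] [AddCommGroup E] [Module 𝕜 E]

theorem exists_nontrivial_relation_four [FiniteDimensional 𝕜 E] (hE : finrank 𝕜 E ≤ 3)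
    (a b c d : E) :
    ∃ p q r s : 𝕜, p • a + q • b + r • c + s • d = 0 ∧ ¬(p = 0 ∧ q = 0 ∧ r = 0 ∧ s = 0) := by
  have hdep : ¬LinearIndependent 𝕜 ![a, b, c, d] := fun h => by
    simpa using h.fintype_card_le_finrank.trans hE
  obtain ⟨g, hg, i, hi⟩ := Fintype.not_linearIndependent_iff.mp hdep
  refine ⟨g 0, g 1, g 2, g 3, by simpa [Fin.sum_univ_four] using hg, ?_⟩
  rintro ⟨h0, h1, h2, h3⟩
  fin_cases i <;> simp_all

variable [LinearOrder 𝕜] [IsStrictOrderedRing 𝕜]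

theorem sq_add_sq_pos_of_smul_add_smul_ne_zero {x y : E} {p q : 𝕜} (h : p • x + q • y ≠ 0) :
    0 < p ^ 2 + q ^ 2 := by
  rcases eq_or_ne p 0 with rfl | hp
  · rcases eq_or_ne q 0 with rfl | hq
    · simp at h
    · positivity
  · positivity

theorem LinearMap.BilinForm.IsSymm.mul_apply_self_nonneg [FiniteDimensional 𝕜 E]
    {B : LinearMap.BilinForm 𝕜 E} (hB : B.IsSymm) (hE : finrank 𝕜 E ≤ 3) {v w : E}
    (hvw : LinearIndependent 𝕜 ![v, w])
    (hv : B v = 0) (hw : B w = 0) (a b : E) : 0 ≤ B a a * B b b := by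
  by_contra! hneg
  obtain ⟨p, q, r, s, hrel, hne⟩ := exists_nontrivial_relation_four hE v w a b
  have ha : r * B a a + s * B b a = 0 := by
    simpa [hv, hw] using congrArg (B · a) hrel
  have hb : r * B a b + s * B b b = 0 := by
    simpa [hv, hw] using congrArg (B · b) hrel
  rw [hB.eq b a] at ha
  have hdet : B a a * B b b - B a b ^ 2 ≠ 0 := by nlinarith [sq_nonneg (B a b)]
  have hr : r = 0 := by
    refine (mul_eq_zero.mp ?_).resolve_right hdet
    linear_combination B b b * ha - B a b * hb
  have hs : s = 0 := by
    refine (mul_eq_zero.mp ?_).resolve_right hdet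
    linear_combination B a a * hb - B a b * ha
  have hpq := LinearIndependent.pair_iff.mp hvw p q (by simpa [hr, hs] using hrel)
  exact hne ⟨hpq.1, hpq.2, hr, hs⟩

end LinearAlgebra

theorem linearIndependent_pair_of_inner_eq_zero {E : Type*} [NormedAddCommGroup E]
    [InnerProductSpace ℝ E] {x y : E} (hx : x ≠ 0) (hy : y ≠ 0) (hxy : ⟪x, y⟫ = 0) :
    LinearIndependent ℝ ![x, y] := by
  refine linearIndependent_of_ne_zero_of_inner_eq_zero (fun i => ?_) fun i j hij => ?_
  · fin_cases i <;> simpa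
  · fin_cases i <;> fin_cases j <;> simp_all [real_inner_comm]

namespace AlgCurvTensor

variable {E : Type*} [NormedAddCommGroup E] [InnerProductSpace ℝ E] (T : AlgCurvTensor E)

theorem apply_self (x : E) : T.R x x = 0 := by
  ext z w
  simpa using neg_eq_self.mp (T.antisym_fst x x z w).symm

theorem apply_comm (x y : E) : T.R y x = -T.R x y := by
  ext z w
  simp [T.antisym_fst x y z w]

theorem apply_lincomb_lincomb (x y : E) (p q r s : ℝ) :
    T.R (p • x + q • y) (r • x + s • y) = (p * s - q * r) • T.R x y := by
  simp only [map_add, map_smul, LinearMap.add_apply, LinearMap.smul_apply, apply_self,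
    T.apply_comm x y]
  module

theorem sec_lincomb_lincomb (x y : E) (p q r s : ℝ) :
    T.R (p • x + q • y) (r • x + s • y) (r • x + s • y) (p • x + q • y) =
      (p * s - q * r) ^ 2 * T.R x y y x := by
  have hlast : T.R x y (r • x + s • y) (p • x + q • y) = (r * q - s * p) * T.R x y x y := by
    rw [T.pair_symm, T.apply_lincomb_lincomb, LinearMap.smul_apply, LinearMap.smul_apply,
      smul_eq_mul, T.pair_symm]
  rw [T.apply_lincomb_lincomb, LinearMap.smul_apply, LinearMap.smul_apply, smul_eq_mul, hlast,
    T.antisym_snd x y x y]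
  ring

def jacobiForm (v : E) : LinearMap.BilinForm ℝ E := (T.R.flip v).flip v

@[simp]
theorem jacobiForm_apply (v x y : E) : T.jacobiForm v x y = T.R x v v y := rfl

theorem jacobiForm_isSymm (v : E) : (T.jacobiForm v).IsSymm := by
  refine ⟨fun x y => ?_⟩
  simp only [jacobiForm_apply]
  rw [T.pair_symm, T.antisym_fst, T.antisym_snd, neg_neg]

theorem jacobiForm_self (v : E) : T.jacobiForm v v = 0 := by
  ext y
  simp [apply_self]

theorem jacobiForm_smul (c : ℝ) (v : E) : T.jacobiForm (c • v) = c ^ 2 • T.jacobiForm v := by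
  ext x y
  simp only [jacobiForm_apply, map_smul, LinearMap.smul_apply, smul_eq_mul]
  ring

theorem jacobiForm_smul_mul_nonneg_iff {c : ℝ} (hc : c ≠ 0) (v a b : E) :
    0 ≤ T.jacobiForm (c • v) a a * T.jacobiForm (c • v) b b ↔
      0 ≤ T.jacobiForm v a a * T.jacobiForm v b b := by
  simp only [jacobiForm_smul, LinearMap.smul_apply, smul_eq_mul, mul_mul_mul_comm]
  exact mul_nonneg_iff_of_pos_left (by positivity)

theorem jacobiForm_mul_nonneg [FiniteDimensional ℝ E] (hE : finrank ℝ E ≤ 3) {v w : E}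
    (hv : v ≠ 0) (hw : w ≠ 0) (hvw : ⟪v, w⟫ = 0) (hJ : ∀ u, T.R w v v u = 0) (a b : E) :
    0 ≤ T.jacobiForm v a a * T.jacobiForm v b b :=
  (T.jacobiForm_isSymm v).mul_apply_self_nonneg hE
    (linearIndependent_pair_of_inner_eq_zero hv hw hvw) (T.jacobiForm_self v) (LinearMap.ext hJ)
    a b

theorem sec_mul_sec_nonneg [FiniteDimensional ℝ E] (hE : finrank ℝ E ≤ 3)
    (hsemi : ∀ v : E, v ≠ 0 → ∀ a b, 0 ≤ T.jacobiForm v a a * T.jacobiForm v b b)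
    {x₁ y₁ x₂ y₂ : E} (h₁ : LinearIndependent ℝ ![x₁, y₁])
    (h₂ : LinearIndependent ℝ ![x₂, y₂]) :
    0 ≤ T.R x₁ y₁ y₁ x₁ * T.R x₂ y₂ y₂ x₂ := by
  obtain ⟨p, q, r, s, hrel, hne⟩ := exists_nontrivial_relation_four hE x₁ y₁ x₂ y₂
  have hv₂ : p • x₁ + q • y₁ = (-r) • x₂ + (-s) • y₂ := by
    rw [neg_smul, neg_smul, ← neg_add, eq_neg_iff_add_eq_zero, ← add_assoc, hrel]
  have hv : p • x₁ + q • y₁ ≠ 0 := by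
    intro h0
    obtain ⟨rfl, rfl⟩ := LinearIndependent.pair_iff.mp h₁ p q h0
    obtain ⟨hr, hs⟩ := LinearIndependent.pair_iff.mp h₂ (-r) (-s) (hv₂ ▸ h0)
    exact hne ⟨rfl, rfl, neg_eq_zero.mp hr, neg_eq_zero.mp hs⟩
  have hpq := sq_add_sq_pos_of_smul_add_smul_ne_zero hv
  have hrs : 0 < (-r) ^ 2 + (-s) ^ 2 := sq_add_sq_pos_of_smul_add_smul_ne_zero (hv₂ ▸ hv)
  have e₁ : T.jacobiForm (p • x₁ + q • y₁) ((-q) • x₁ + p • y₁) ((-q) • x₁ + p • y₁) =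
      (p ^ 2 + q ^ 2) ^ 2 * T.R x₁ y₁ y₁ x₁ := by
    rw [jacobiForm_apply, sec_lincomb_lincomb]; ring
  have e₂ : T.jacobiForm (p • x₁ + q • y₁) (s • x₂ + (-r) • y₂) (s • x₂ + (-r) • y₂) =
      ((-r) ^ 2 + (-s) ^ 2) ^ 2 * T.R x₂ y₂ y₂ x₂ := by
    rw [hv₂, jacobiForm_apply, sec_lincomb_lincomb]; ring
  have key := hsemi _ hv ((-q) • x₁ + p • y₁) (s • x₂ + (-r) • y₂)
  rw [e₁, e₂, mul_mul_mul_comm] at key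
  exact nonneg_of_mul_nonneg_right key (by positivity)

end AlgCurvTensor

/-- If every unit vector `v` of a `3`-dimensional inner product space admits a nonzero
vector `w ⟂ v` with `R(w,v)v = 0` (i.e., `w ∈ ker J_v`, expressed by the vanishing of all
inner products `⟨R(w,v)v, u⟩ = R w v v u`), then `R` has signed sectional curvatures:
either all sectional curvatures are `≥ 0`, or all are `≤ 0`. -/
theorem signed_sec_of_jacobi_kernels {E : Type*} [NormedAddCommGroup E]
    [InnerProductSpace ℝ E] [FiniteDimensional ℝ E] (hdim : Module.finrank ℝ E = 3)
    (T : AlgCurvTensor E)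
    (hker : ∀ v : E, ‖v‖ = 1 → ∃ w : E, w ≠ 0 ∧ ⟪v, w⟫ = 0 ∧ ∀ u : E, T.R w v v u = 0) :
    (∀ x y : E, ‖x‖ = 1 → ‖y‖ = 1 → ⟪x, y⟫ = 0 → 0 ≤ T.R x y y x) ∨
    (∀ x y : E, ‖x‖ = 1 → ‖y‖ = 1 → ⟪x, y⟫ = 0 → T.R x y y x ≤ 0) := by
  have hsemi : ∀ v : E, v ≠ 0 → ∀ a b, 0 ≤ T.jacobiForm v a a * T.jacobiForm v b b := by
    intro v hv a b
    obtain ⟨w, hw, hvw, hJ⟩ := hker _ (norm_smul_inv_norm (𝕜 := ℝ) hv)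
    rw [← T.jacobiForm_smul_mul_nonneg_iff (inv_ne_zero (norm_ne_zero_iff.mpr hv))]
    exact T.jacobiForm_mul_nonneg hdim.le (by simpa using hv) hw hvw hJ a b
  have hind : ∀ x y : E, ‖x‖ = 1 → ‖y‖ = 1 → ⟪x, y⟫ = 0 → LinearIndependent ℝ ![x, y] :=
    fun x y hx hy => linearIndependent_pair_of_inner_eq_zero (by rintro rfl; simp at hx)
      (by rintro rfl; simp at hy)
  by_contra! h
  obtain ⟨⟨x₁, y₁, hx₁, hy₁, h₁, hneg⟩, ⟨x₂, y₂, hx₂, hy₂, h₂, hpos⟩⟩ := h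
  have := T.sec_mul_sec_nonneg hdim.le hsemi (hind x₁ y₁ hx₁ hy₁ h₁) (hind x₂ y₂ hx₂ hy₂ h₂)
  linarith [mul_neg_of_neg_of_pos hneg hpos]
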